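/- Let M be a positroid on [n] whose decorated permutation π^: has π(j) = j with color col(j) = -1 (j is a loop-free coloop-type fixed point, i.e., j lies in every basis). Then the decorated permutation of the contraction M/{j} is (π, col') where col'(j) = 1 and col'(i) = col(i) for i ≠ j. -/

import Mathlib

open Finset

/-- Position of `a` in the cyclic (linear) order starting at `t` on `Fin n`. -/
def cval {n : ℕ} (t a : Fin n) : ℕ := ((a - t : Fin n) : ℕ)

/-- Gale order on finsets of `Fin n` induced by the linear order with key `f`:
compare the sorted lists of keys coordinatewise. -/
def galeLEKey {n : ℕ} (f : Fin n → ℕ) (A B : Finset (Fin n)) : Prop :=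
  List.Forall₂ (· ≤ ·) ((A.image f).sort (· ≤ ·)) ((B.image f).sort (· ≤ ·))

/-- Gale order `≤_t` induced by the cyclic order starting at `t`. -/
def galeLE {n : ℕ} (t : Fin n) (A B : Finset (Fin n)) : Prop :=
  galeLEKey (cval t) A B

/-- The set of maximal elements of `D` w.r.t. `≤_a` (a singleton when `D` is nonempty). -/
def cmax {n : ℕ} (a : Fin n) (D : Finset (Fin n)) : Finset (Fin n) :=
  D.filter (fun x => ∀ y ∈ D, cval a y ≤ cval a x)

/-- The set of minimal elements of `D` w.r.t. `≤_a` (a singleton when `D` is nonempty). -/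
def cmin {n : ℕ} (a : Fin n) (D : Finset (Fin n)) : Finset (Fin n) :=
  D.filter (fun x => ∀ y ∈ D, cval a x ≤ cval a y)

/-- A Grassmann necklace on `[n]`. -/
def IsGrassmannNecklace {n : ℕ} [NeZero n] (I : Fin n → Finset (Fin n)) : Prop :=
  ∀ i : Fin n,
    (i ∈ I i → ∃ j : Fin n, I (i + 1) = insert j (I i \ {i})) ∧
    (i ∉ I i → I (i + 1) = I i)

/-- A decorated permutation: a permutation with fixed points colored by `1` or `-1`
(non-fixed points carry the dummy color `1`). -/
structure DecoratedPerm (n : ℕ) where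
  π : Equiv.Perm (Fin n)
  col : Fin n → ℤ
  col_fixed : ∀ i, π i = i → col i = 1 ∨ col i = -1
  col_nonfixed : ∀ i, π i ≠ i → col i = 1

/-- The Grassmann necklace associated to a decorated permutation:
`I_r = { i : i <_r π⁻¹(i), or π(i) = i and col(i) = -1 }`. -/
def necklaceOf {n : ℕ} (P : DecoratedPerm n) : Fin n → Finset (Fin n) :=
  fun r => Finset.univ.filter
    (fun i => cval r i < cval r (P.π.symm i) ∨ (P.π i = i ∧ P.col i = -1))

/-- The forward map from Grassmann necklaces to decorated permutations:
`P` corresponds to the necklace `I`. -/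
def Corresponds {n : ℕ} [NeZero n] (I : Fin n → Finset (Fin n)) (P : DecoratedPerm n) : Prop :=
  ∀ i : Fin n,
    ((I (i + 1) = I i ∧ i ∉ I i) → (P.π i = i ∧ P.col i = 1)) ∧
    ((I (i + 1) = I i ∧ i ∈ I i) → (P.π i = i ∧ P.col i = -1)) ∧
    (∀ j : Fin n, j ≠ i → i ∈ I i → I (i + 1) = insert j (I i \ {i}) → P.π i = j)

/-- `phiSet I j a` is `{j}` if `j ∈ I_a`, and otherwise `{max_a (I_a \ I_j)}`. -/
def phiSet {n : ℕ} (I : Fin n → Finset (Fin n)) (j a : Fin n) : Finset (Fin n) :=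
  if j ∈ I a then {j} else cmax a (I a \ I j)

/-- One pass of the contraction algorithm (fuel-indexed; the loop walks `a ← a+1`). -/
def contractLoop {n : ℕ} [NeZero n] (π : Equiv.Perm (Fin n)) (j : Fin n) :
    ℕ → (Fin n → Fin n) → (Fin n → ℤ) → Fin n → Fin n →
      (Fin n → Fin n) × (Fin n → ℤ)
  | 0, μ, c, q, a => (Function.update μ a q, c)
  | fuel + 1, μ, c, q, a =>
    if π a = j then (Function.update μ a q, c)
    else if q = a ∨ (cval (a + 1) q < cval (a + 1) (π a) ∧
                      cval (a + 1) (π a) < cval (a + 1) j) then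
      contractLoop π j fuel (Function.update μ a q)
        (if q = a then Function.update c a 1 else c) (π a) (a + 1)
    else
      contractLoop π j fuel μ c q (a + 1)

/-- The contraction algorithm: output `(μ, col')` from `(π, col)` and `j`. -/
def contractAlg {n : ℕ} [NeZero n] (π : Equiv.Perm (Fin n)) (col : Fin n → ℤ) (j : Fin n) :
    (Fin n → Fin n) × (Fin n → ℤ) :=
  contractLoop π j n (Function.update (⇑π) j j) (Function.update col j 1) (π j) (j + 1)

/-- One pass of the restriction algorithm (the loop walks `a ← a-1`). -/
def restrictLoop {n : ℕ} [NeZero n] (π : Equiv.Perm (Fin n)) (j : Fin n) :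
    ℕ → (Fin n → Fin n) → (Fin n → ℤ) → Fin n → Fin n →
      (Fin n → Fin n) × (Fin n → ℤ)
  | 0, μ, c, q, a => (Function.update μ a q, c)
  | fuel + 1, μ, c, q, a =>
    if π a = j then (Function.update μ a q, c)
    else if q = a ∨ (cval a j < cval a (π a) ∧ cval a (π a) < cval a q) then
      restrictLoop π j fuel (Function.update μ a q)
        (if q = a then Function.update c a 1 else c) (π a) (a - 1)
    else
      restrictLoop π j fuel μ c q (a - 1)

/-- The restriction algorithm: output `(μ, col')` from `(π, col)` and `j`. -/
def restrictAlg {n : ℕ} [NeZero n] (π : Equiv.Perm (Fin n)) (col : Fin n → ℤ) (j : Fin n) :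
    (Fin n → Fin n) × (Fin n → ℤ) :=
  restrictLoop π j n (Function.update (⇑π) j j) (Function.update col j 1) (π j) (j - 1)


/-
Recolouring the fixed point `j` from `-1` to `1` erases `j` from every `I_t`, so everything
reduces to cancellativity of the Gale order. Comparing sorted lists coordinatewise is the same
as comparing the counting functions `k ↦ #{x ∈ A | x ≤ k}`, and a common element shifts both
counts equally. Finally `j ∉ H` is forced by `I'_j ≤_j H`: `j` is the least element of `≤_j`
and `j ∉ I'_j`.
-/

theorem List.Forall₂.countP_le {α : Type*} [LinearOrder α] {l₁ l₂ : List α}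
    (h : List.Forall₂ (· ≤ ·) l₁ l₂) (k : α) :
    l₂.countP (· ≤ k) ≤ l₁.countP (· ≤ k) := by
  induction h with
  | nil => simp
  | @cons a b l₁ l₂ hab _ ih =>
    rw [List.countP_cons, List.countP_cons]
    by_cases hb : b ≤ k
    · simp only [hb, hab.trans hb, decide_true, if_true]
      omega
    · simp only [hb, decide_false, Bool.false_eq_true, if_false]
      omega

theorem List.countP_le_eq_zero_of_pairwise {α : Type*} [LinearOrder α] {a k : α} {l : List α}
    (hl : (a :: l).Pairwise (· ≤ ·)) (hk : k < a) : (a :: l).countP (· ≤ k) = 0 := by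
  rw [List.countP_eq_zero]
  intro x hx
  have hax : a ≤ x := by
    rcases List.mem_cons.1 hx with rfl | hx
    · exact le_rfl
    · exact List.rel_of_pairwise_cons hl hx
  simpa using hk.trans_le hax

theorem List.forall₂_le_of_countP_le {α : Type*} [LinearOrder α] :
    ∀ {l₁ l₂ : List α}, l₁.Pairwise (· ≤ ·) → l₂.Pairwise (· ≤ ·) →
      l₁.length = l₂.length → (∀ k, l₂.countP (· ≤ k) ≤ l₁.countP (· ≤ k)) →
      List.Forall₂ (· ≤ ·) l₁ l₂
  | [], [], _, _, _, _ => .nil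
  | a :: l₁, b :: l₂, h₁, h₂, hlen, hcount => by
    have hab : a ≤ b := by
      by_contra! hba
      have := hcount b
      rw [List.countP_le_eq_zero_of_pairwise h₁ hba, List.countP_cons] at this
      simp at this
    refine .cons hab (List.forall₂_le_of_countP_le h₁.of_cons h₂.of_cons
      (Nat.succ_injective hlen) fun k => ?_)
    have h := hcount k
    by_cases hb : b ≤ k
    · rw [List.countP_cons, List.countP_cons] at h
      simp only [hb, hab.trans hb, decide_true, if_true] at h
      omega
    · have h₂k := List.countP_le_eq_zero_of_pairwise h₂ (not_le.1 hb)
      rw [List.countP_cons] at h₂k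
      omega

theorem Finset.countP_le_sort_image {β α : Type*} [LinearOrder α] {f : β → α}
    (hf : Function.Injective f) (A : Finset β) (k : α) :
    ((A.image f).sort (· ≤ ·)).countP (· ≤ k) = #{x ∈ A | f x ≤ k} := by
  rw [((A.image f).sort_perm_toList (· ≤ ·)).countP_eq, ← Multiset.coe_countP]
  simp only [Finset.coe_toList, Multiset.countP_eq_card_filter]
  rw [← Finset.filter_val, Finset.card_val, Finset.filter_image,
    Finset.card_image_of_injective _ hf]

theorem galeLEKey_iff_card_filter_le {n : ℕ} {f : Fin n → ℕ} (hf : Function.Injective f)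
    (A B : Finset (Fin n)) :
    galeLEKey f A B ↔ #A = #B ∧ ∀ k, #{x ∈ B | f x ≤ k} ≤ #{x ∈ A | f x ≤ k} := by
  have hlen : ∀ C : Finset (Fin n), ((C.image f).sort (· ≤ ·)).length = #C := fun C => by
    rw [Finset.length_sort, Finset.card_image_of_injective _ hf]
  simp only [← Finset.countP_le_sort_image hf, ← hlen]
  exact ⟨fun h => ⟨h.length_eq, h.countP_le⟩, fun ⟨hcard, hcount⟩ =>
    List.forall₂_le_of_countP_le (Finset.pairwise_sort _ _) (Finset.pairwise_sort _ _)
      hcard hcount⟩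

theorem cval_injective {n : ℕ} (t : Fin n) : Function.Injective (cval t) := by
  have : NeZero n := NeZero.of_pos t.pos
  exact fun _ _ h => sub_left_injective (Fin.val_injective h : _ - t = _ - t)

theorem cval_eq_zero_iff {n : ℕ} {t a : Fin n} : cval t a = 0 ↔ a = t := by
  have : NeZero n := NeZero.of_pos t.pos
  simp [cval, Fin.ext_iff, sub_eq_zero]

theorem galeLE_iff_card_filter_le {n : ℕ} (t : Fin n) (A B : Finset (Fin n)) :
    galeLE t A B ↔
      #A = #B ∧ ∀ k, #{x ∈ B | cval t x ≤ k} ≤ #{x ∈ A | cval t x ≤ k} :=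
  galeLEKey_iff_card_filter_le (cval_injective t) A B

theorem galeLE_insert_insert_iff {n : ℕ} {t j : Fin n} {A B : Finset (Fin n)}
    (hA : j ∉ A) (hB : j ∉ B) :
    galeLE t (insert j A) (insert j B) ↔ galeLE t A B := by
  simp only [galeLE_iff_card_filter_le, Finset.filter_insert, Finset.card_insert_of_notMem hA,
    Finset.card_insert_of_notMem hB, Nat.add_right_cancel_iff]
  refine and_congr_right fun _ => forall_congr' fun k => ?_
  split_ifs
  · rw [Finset.card_insert_of_notMem (mt (Finset.mem_of_mem_filter j) hB),
      Finset.card_insert_of_notMem (mt (Finset.mem_of_mem_filter j) hA),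
      Nat.add_le_add_iff_right]
  · rfl

theorem notMem_of_galeLE_self {n : ℕ} {j : Fin n} {A H : Finset (Fin n)} (hjA : j ∉ A)
    (h : galeLE j A H) : j ∉ H := by
  intro hjH
  have hcount := ((galeLE_iff_card_filter_le j A H).1 h).2 0
  have hA0 : #{x ∈ A | cval j x ≤ 0} = 0 := by
    simp only [Finset.card_eq_zero, Finset.filter_eq_empty_iff, Nat.le_zero, cval_eq_zero_iff]
    exact fun x hx hxj => hjA (hxj ▸ hx)
  have hH0 : 0 < #{x ∈ H | cval j x ≤ 0} :=
    Finset.card_pos.2 ⟨j, Finset.mem_filter.2 ⟨hjH, cval_eq_zero_iff.2 rfl |>.le⟩⟩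
  omega

section Coloop

variable {n : ℕ} {P P' : DecoratedPerm n} {j : Fin n}

theorem mem_necklaceOf_of_coloop (h1 : P.π j = j) (h2 : P.col j = -1) (t : Fin n) :
    j ∈ necklaceOf P t := by
  simp [necklaceOf, h1, h2]

theorem necklaceOf_recolor_eq_erase (h1 : P.π j = j) (hπ : P'.π = P.π) (hcj : P'.col j = 1)
    (hc : ∀ i : Fin n, i ≠ j → P'.col i = P.col i) (t : Fin n) :
    necklaceOf P' t = (necklaceOf P t).erase j := by
  have hsymm : P.π.symm j = j := P.π.symm_apply_eq.mpr h1.symm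
  ext i
  simp only [necklaceOf, Finset.mem_filter, Finset.mem_univ, true_and, Finset.mem_erase, hπ]
  by_cases hij : i = j
  · subst hij
    simp [hsymm, hcj]
  · simp [hij, hc i hij]

end Coloop

theorem contraction_of_coloop_fixed_point_general (n : ℕ)
    (P : DecoratedPerm n) (j : Fin n) (h1 : P.π j = j) (h2 : P.col j = -1)
    (P' : DecoratedPerm n) (hπ : P'.π = P.π) (hcj : P'.col j = 1)
    (hc : ∀ i : Fin n, i ≠ j → P'.col i = P.col i) :
    ∀ H : Finset (Fin n),
      (∃ H' : Finset (Fin n),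
          (∀ t : Fin n, galeLE t (necklaceOf P t) H') ∧ j ∈ H' ∧ H = H'.erase j) ↔
      (∀ t : Fin n, galeLE t (necklaceOf P' t) H) := by
  have hjI := mem_necklaceOf_of_coloop h1 h2
  have hI' := necklaceOf_recolor_eq_erase h1 hπ hcj hc
  have hjI' : ∀ t, j ∉ necklaceOf P' t := fun t => hI' t ▸ Finset.notMem_erase j _
  have hgale : ∀ t {H}, j ∉ H →
      (galeLE t (necklaceOf P t) (insert j H) ↔ galeLE t (necklaceOf P' t) H) := fun t _ hjH => by
    rw [← galeLE_insert_insert_iff (hjI' t) hjH, hI', Finset.insert_erase (hjI t)]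
  intro H
  constructor
  · rintro ⟨H', hg, hjH', rfl⟩ t
    rw [← hgale t (Finset.notMem_erase j H'), Finset.insert_erase hjH']
    exact hg t
  · intro hg
    have hjH : j ∉ H := notMem_of_galeLE_self (hjI' j) (hg j)
    exact ⟨insert j H, fun t => (hgale t hjH).2 (hg t), Finset.mem_insert_self j H,
      (Finset.erase_insert hjH).symm⟩

/-- if `π(j) = j` with `col(j) = -1`, the decorated permutation of the
contraction `M/{j}` is `(π, col')` with `col'(j) = 1` and `col'(i) = col(i)` for `i ≠ j`. -/
theorem contraction_of_coloop_fixed_point (n : ℕ) [NeZero n]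
    (P : DecoratedPerm n) (j : Fin n) (h1 : P.π j = j) (h2 : P.col j = -1)
    (P' : DecoratedPerm n) (hπ : P'.π = P.π) (hcj : P'.col j = 1)
    (hc : ∀ i : Fin n, i ≠ j → P'.col i = P.col i) :
    ∀ H : Finset (Fin n),
      (∃ H' : Finset (Fin n),
          (∀ t : Fin n, galeLE t (necklaceOf P t) H') ∧ j ∈ H' ∧ H = H'.erase j) ↔
      (∀ t : Fin n, galeLE t (necklaceOf P' t) H) :=
  contraction_of_coloop_fixed_point_general n P j h1 h2 P' hπ hcj hc
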